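/- arXiv:2408.10521 — 2 statements merged into one kernel-verified Lean document; each statement's English description precedes it below -/
import Mathlib

section
/- Let M be a commutative monoid with the cancellation property, X a free M-module (i.e., a set with M-action admitting a basis X' such that every x ∈ X is uniquely a·y with a ∈ M, y ∈ X'). If N₁ and N₂ are finitely generated submonoids of M, then N₁ ∩ N₂ is a finitely generated submonoid of M. -/
open Set

lemma pi_isPWO {σ : Type} [Fintype σ] (S : Set (σ → ℕ)) : S.IsPWO := by
  have h := Set.isPWO_of_wellQuasiOrderedLE (Finsupp.equivFunOnFinite ⁻¹' S : Set (σ →₀ ℕ))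
  have himg : (fun f : σ →₀ ℕ => Finsupp.equivFunOnFinite f) ''
      (Finsupp.equivFunOnFinite ⁻¹' S) = S :=
    Set.image_preimage_eq S Finsupp.equivFunOnFinite.surjective
  rw [← himg]
  exact h.image_of_monotone (fun a b hab => by exact fun i => hab i)

/-- A submonoid of `σ → ℕ` closed under truncated subtraction is finitely generated. -/
lemma fg_of_sub_closed {σ : Type} [Fintype σ] (S : AddSubmonoid (σ → ℕ))
    (hsub : ∀ a ∈ S, ∀ b ∈ S, a ≤ b → b - a ∈ S) : S.FG := by
  classical
  set T : Set (σ → ℕ) := {x | x ∈ S ∧ x ≠ 0} with hT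
  set Mn : Set (σ → ℕ) := {m | m ∈ T ∧ ∀ c ∈ T, ¬ c < m} with hMn
  have hMnfin : Mn.Finite := by
    have hanti : IsAntichain (· ≤ ·) Mn := by
      intro a ha b hb hab hle
      exact hb.2 a ha.1 (lt_of_le_of_ne hle hab)
    exact hanti.finite_of_partiallyWellOrderedOn (pi_isPWO Mn)
  refine ⟨hMnfin.toFinset, le_antisymm ?_ ?_⟩
  · rw [AddSubmonoid.closure_le]
    intro m hm
    simp only [Finite.coe_toFinset] at hm
    exact hm.1.1
  · intro s hs
    have key : ∀ n : ℕ, ∀ s ∈ S, (∑ i, s i) ≤ n →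
        s ∈ AddSubmonoid.closure (hMnfin.toFinset : Set (σ → ℕ)) := by
      intro n
      induction n with
      | zero =>
        intro s hsS hdeg
        have hs0 : s = 0 := by
          funext i
          have := Finset.sum_eq_zero_iff.1 (Nat.le_zero.1 hdeg) i (Finset.mem_univ i)
          simpa using this
        rw [hs0]
        exact AddSubmonoid.zero_mem _
      | succ n ih =>
        intro s hsS hdeg
        by_cases h0 : s = 0
        · rw [h0]; exact AddSubmonoid.zero_mem _
        · set U : Set (σ → ℕ) := {c | c ∈ T ∧ c ≤ s} with hU
          have hUwf : U.IsWF := (pi_isPWO U).isWF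
          have hUne : U.Nonempty := ⟨s, ⟨hsS, h0⟩, le_refl s⟩
          set m := hUwf.min hUne with hm
          have hmU : m ∈ U := hUwf.min_mem hUne
          have hmMin : m ∈ Mn := by
            refine ⟨hmU.1, fun c hc hlt => ?_⟩
            exact hUwf.not_lt_min hUne ⟨hc, hlt.le.trans hmU.2⟩ hlt
          have hmS : m ∈ S := hmU.1.1
          have hmle : m ≤ s := hmU.2
          have hsub' : s - m ∈ S := hsub m hmS s hsS hmle
          have hdeg' : (∑ i, (s - m) i) ≤ n := by
            have hm0 : m ≠ 0 := hmU.1.2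
            obtain ⟨j, hj⟩ : ∃ j, m j ≠ 0 := by
              by_contra h
              push_neg at h
              exact hm0 (funext fun j => h j)
            have h1 : (∑ i, (s - m) i) + (∑ i, m i) = ∑ i, s i := by
              rw [← Finset.sum_add_distrib]
              refine Finset.sum_congr rfl fun i _ => ?_
              have : m i ≤ s i := hmle i
              simp only [Pi.sub_apply]
              omega
            have h2 : 1 ≤ ∑ i, m i :=
              le_trans (Nat.one_le_iff_ne_zero.2 hj)
                (Finset.single_le_sum (fun i _ => Nat.zero_le _) (Finset.mem_univ j))
            omega
          have hrec := ih (s - m) hsub' hdeg'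
          have hmcl : m ∈ AddSubmonoid.closure (hMnfin.toFinset : Set (σ → ℕ)) := by
            apply AddSubmonoid.subset_closure
            simpa using hmMin
          have hms : m + (s - m) = s := by
            funext i
            have : m i ≤ s i := hmle i
            simp only [Pi.add_apply, Pi.sub_apply]
            omega
          exact hms ▸ AddSubmonoid.add_mem _ hmcl hrec
    exact key (∑ i, s i) s hs le_rfl

lemma exists_rep {M : Type} [AddCommMonoid M] (s : Finset M) {x : M}
    (hx : x ∈ AddSubmonoid.closure (↑s : Set M)) :
    ∃ u : ↥s → ℕ, ∑ i : ↥s, u i • (i : M) = x := by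
  classical
  induction hx using AddSubmonoid.closure_induction with
  | mem y hy =>
    refine ⟨Pi.single ⟨y, hy⟩ 1, ?_⟩
    rw [Fintype.sum_eq_single (⟨y, hy⟩ : ↥s)]
    · simp
    · intro b hb
      rw [Pi.single_eq_of_ne hb]
      simp
  | zero => exact ⟨0, by simp⟩
  | add y z _ _ hy hz =>
    obtain ⟨u, hu⟩ := hy
    obtain ⟨v, hv⟩ := hz
    refine ⟨u + v, ?_⟩
    rw [← hu, ← hv, ← Finset.sum_add_distrib]
    exact Finset.sum_congr rfl fun i _ => by simp [add_nsmul]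

theorem fg_inter_of_fg_submonoids' (M : Type) [AddCancelCommMonoid M]
    (N₁ N₂ : AddSubmonoid M) (h1 : N₁.FG) (h2 : N₂.FG) : (N₁ ⊓ N₂).FG := by
  classical
  obtain ⟨s, hsgen⟩ := h1
  obtain ⟨t, htgen⟩ := h2
  set σ := (↥s ⊕ ↥t : Type) with hσ
  let φ : (σ → ℕ) →+ M :=
    { toFun := fun w => ∑ i : ↥s, w (Sum.inl i) • (i : M)
      map_zero' := by simp
      map_add' := by
        intro w v
        rw [← Finset.sum_add_distrib]
        exact Finset.sum_congr rfl fun i _ => by simp [add_nsmul] }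
  let ψ : (σ → ℕ) →+ M :=
    { toFun := fun w => ∑ j : ↥t, w (Sum.inr j) • (j : M)
      map_zero' := by simp
      map_add' := by
        intro w v
        rw [← Finset.sum_add_distrib]
        exact Finset.sum_congr rfl fun j _ => by simp [add_nsmul] }
  set E : AddSubmonoid (σ → ℕ) :=
    { carrier := {w | φ w = ψ w}
      zero_mem' := by simp
      add_mem' := by
        intro a b ha hb
        simp only [Set.mem_setOf_eq, map_add] at *
        rw [ha, hb] } with hE
  have hEfg : E.FG := by
    apply fg_of_sub_closed
    intro a ha b hb hle
    have hba : b - a + a = b := by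
      funext i
      have : a i ≤ b i := hle i
      simp only [Pi.add_apply, Pi.sub_apply]
      omega
    have hφ : φ (b - a) + φ a = φ b := by rw [← map_add, hba]
    have hψ : ψ (b - a) + ψ a = ψ b := by rw [← map_add, hba]
    have ha' : φ a = ψ a := ha
    have hb' : φ b = ψ b := hb
    show φ (b - a) = ψ (b - a)
    have : φ (b - a) + φ a = ψ (b - a) + φ a := by
      rw [hφ, hb', ← hψ, ha']
    exact add_right_cancel this
  have hmap : (N₁ ⊓ N₂) = E.map φ := by
    apply le_antisymm
    · rintro x ⟨hx1, hx2⟩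
      rw [← hsgen] at hx1
      rw [← htgen] at hx2
      obtain ⟨u, hu⟩ := exists_rep s hx1
      obtain ⟨v, hv⟩ := exists_rep t hx2
      refine ⟨Sum.elim u v, ?_, ?_⟩
      · show (∑ i : ↥s, Sum.elim u v (Sum.inl i) • (i : M)) =
          ∑ j : ↥t, Sum.elim u v (Sum.inr j) • (j : M)
        simp only [Sum.elim_inl, Sum.elim_inr]
        rw [hu, hv]
      · show (∑ i : ↥s, Sum.elim u v (Sum.inl i) • (i : M)) = x
        simpa using hu
    · rintro x ⟨w, hw, rfl⟩
      have hφmem : φ w ∈ N₁ := by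
        apply AddSubmonoid.sum_mem
        intro i _
        apply AddSubmonoid.nsmul_mem
        rw [← hsgen]
        exact AddSubmonoid.subset_closure i.2
      have hψmem : ψ w ∈ N₂ := by
        apply AddSubmonoid.sum_mem
        intro j _
        apply AddSubmonoid.nsmul_mem
        rw [← htgen]
        exact AddSubmonoid.subset_closure j.2
      have hEw : φ w = ψ w := hw
      exact ⟨hφmem, hEw ▸ hψmem⟩
  rw [hmap]
  exact AddSubmonoid.FG.map hEfg φ



/-- `X` is a free `M`-module: there is a basis `X' ⊆ X` such that every `x ∈ X` is
uniquely of the form `a +ᵥ y` with `a ∈ M` and `y ∈ X'`. -/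
def IsFreeAddModule (M X : Type) [AddMonoid M] [AddAction M X] : Prop :=
  ∃ X' : Set X, ∀ x : X, ∃! p : M × X', p.1 +ᵥ (p.2 : X) = x

/-- If `M` is a cancellative commutative monoid admitting a free `M`-module `X`, and
`N₁, N₂` are finitely generated submonoids of `M`, then `N₁ ∩ N₂` is finitely generated. -/
theorem fg_inter_of_fg_submonoids (M X : Type) [AddCancelCommMonoid M] [AddAction M X]
    (hX : IsFreeAddModule M X) (N₁ N₂ : AddSubmonoid M) (h1 : N₁.FG) (h2 : N₂.FG) :
    (N₁ ⊓ N₂).FG := by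
  exact fg_inter_of_fg_submonoids' M N₁ N₂ h1 h2
end

section
/- Let M be an integral (cancellative) commutative monoid and X a free M-module. Let N₁, N₂ be finitely generated submonoids of M, and for i = 1, 2 let Yᵢ ⊂ X be a finitely generated Nᵢ-submodule. Then Y₁ ∩ Y₂ is a finitely generated (N₁ ∩ N₂)-module. -/
/-- `Y ⊆ X` is a finitely generated `N`-submodule:
`Y = ⋃_{y ∈ Y'} (N +ᵥ y)` for some finite `Y' ⊆ Y`. -/
def IsFGSubmodule {M X : Type} [AddMonoid M] [AddAction M X]
    (N : AddSubmonoid M) (Y : Set X) : Prop :=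
  ∃ Y' : Finset X, ↑Y' ⊆ Y ∧ Y = {x | ∃ a ∈ N, ∃ y ∈ Y', a +ᵥ y = x}

/-- In a free module over a cancellative monoid, the action is cancellative. -/
lemma vadd_cancel_of_free {M X : Type} [AddCancelCommMonoid M] [AddAction M X]
    (hX : IsFreeAddModule M X) {a b : M} {x : X} (h : a +ᵥ x = b +ᵥ x) : a = b := by
  obtain ⟨X', hX'⟩ := hX
  obtain ⟨⟨c, w⟩, hcw, _⟩ := hX' x
  obtain ⟨p, hp, hu⟩ := hX' (a +ᵥ x)
  have h1 : ((a + c, w) : M × X') = p := hu _ (by simp only [add_vadd, hcw])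
  have h2 : ((b + c, w) : M × X') = p := hu _ (by simp only [add_vadd, hcw, h])
  have hac : a + c = b + c := congrArg Prod.fst (h1.trans h2.symm)
  exact add_right_cancel hac

/-- The canonical "evaluation" of an exponent vector on a finite generating set. -/
def expSum {M : Type} [AddCommMonoid M] (s : Finset M) (u : s → ℕ) : M :=
  ∑ i : s, u i • (i : M)

lemma expSum_mem_closure {M : Type} [AddCommMonoid M] (s : Finset M) (u : s → ℕ) :
    expSum s u ∈ AddSubmonoid.closure (s : Set M) :=
  AddSubmonoid.sum_mem _ fun i _ =>
    AddSubmonoid.nsmul_mem _ (AddSubmonoid.subset_closure i.2) _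

lemma expSum_add {M : Type} [AddCommMonoid M] (s : Finset M) (u v : s → ℕ) :
    expSum s (u + v) = expSum s u + expSum s v := by
  simp [expSum, add_nsmul, Finset.sum_add_distrib]

lemma exists_expSum_of_mem_closure {M : Type} [AddCommMonoid M] {s : Finset M} {a : M}
    (h : a ∈ AddSubmonoid.closure (s : Set M)) : ∃ u : s → ℕ, expSum s u = a := by
  induction h using AddSubmonoid.closure_induction with
  | mem x hx =>
    classical
    have hx' : x ∈ s := hx
    refine ⟨fun i => if i = ⟨x, hx'⟩ then 1 else 0, ?_⟩
    calc ∑ i : s, (if i = ⟨x, hx'⟩ then 1 else 0) • (i : M)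
        = ∑ i : s, (if i = ⟨x, hx'⟩ then (i : M) else 0) :=
          Finset.sum_congr rfl (fun i _ => by split <;> simp)
      _ = x := by
          rw [Finset.sum_ite_eq' Finset.univ (⟨x, hx'⟩ : s) (fun i => (i : M))]; simp
  | zero => exact ⟨0, by simp [expSum]⟩
  | add x y hx hy ihx ihy =>
    obtain ⟨u, hu⟩ := ihx; obtain ⟨v, hv⟩ := ihy
    exact ⟨u + v, by rw [expSum_add, hu, hv]⟩

/-- Dickson's lemma: any subset of `ℕ^ι × ℕ^κ` has a finite dominating subset. -/
lemma dickson_dominating {ι κ : Type} [Finite ι] [Finite κ]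
    (S : Set ((ι → ℕ) × (κ → ℕ))) :
    ∃ F : Set ((ι → ℕ) × (κ → ℕ)), F.Finite ∧ F ⊆ S ∧ ∀ x ∈ S, ∃ f ∈ F, f ≤ x := by
  have hι : (Set.univ : Set (ι → ℕ)).IsPWO :=
    Set.isPWO_of_wellQuasiOrderedLE _
  have hκ : (Set.univ : Set (κ → ℕ)).IsPWO :=
    Set.isPWO_of_wellQuasiOrderedLE _
  have hpwo : S.IsPWO := (hι.prod hκ).mono (by simp [Set.subset_def])
  set Min := {x ∈ S | ∀ y ∈ S, y ≤ x → x ≤ y} with hMin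
  refine ⟨Min, ?_, fun x hx => hx.1, ?_⟩
  · by_contra hinf
    have hinf' : Min.Infinite := hinf
    have f := hinf'.natEmbedding
    obtain ⟨m, n, hmn, hle⟩ := hpwo (fun k => ⟨(f k : (ι → ℕ) × (κ → ℕ)),
      (f k).2.1⟩)
    have hge : (f n : (ι → ℕ) × (κ → ℕ)) ≤ f m := (f n).2.2 _ (f m).2.1 hle
    have : f m = f n := Subtype.ext (le_antisymm hle hge)
    exact absurd (f.injective this) hmn.ne
  · intro x hx
    have hwf : {y ∈ S | y ≤ x}.IsWF := hpwo.isWF.mono (fun y hy => hy.1)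
    have hne : {y ∈ S | y ≤ x}.Nonempty := ⟨x, hx, le_refl x⟩
    set z := hwf.min hne with hzdef
    have hz : z ∈ {y ∈ S | y ≤ x} := hwf.min_mem hne
    refine ⟨z, ⟨hz.1, fun y hy hyz => ?_⟩, hz.2⟩
    by_contra hzy
    exact hwf.not_lt_min hne ⟨hy, hyz.trans hz.2⟩
      (lt_of_le_of_ne hyz (fun e => hzy (e ▸ le_refl _)))

/-- If `M` is an integral (cancellative) commutative monoid, `X` a free `M`-module,
`N₁, N₂` finitely generated submonoids of `M` and `Yᵢ ⊆ X` a finitely generated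
`Nᵢ`-submodule for `i = 1, 2`, then `Y₁ ∩ Y₂` is a finitely generated
`(N₁ ∩ N₂)`-module. -/
theorem fg_inter_of_fg_submodules (M X : Type) [AddCancelCommMonoid M] [AddAction M X]
    (hX : IsFreeAddModule M X) (N₁ N₂ : AddSubmonoid M) (h1 : N₁.FG) (h2 : N₂.FG)
    (Y₁ Y₂ : Set X) (hY1 : IsFGSubmodule N₁ Y₁) (hY2 : IsFGSubmodule N₂ Y₂) :
    IsFGSubmodule (N₁ ⊓ N₂) (Y₁ ∩ Y₂) := by
  classical
  obtain ⟨s₁, hs₁⟩ := h1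
  obtain ⟨s₂, hs₂⟩ := h2
  obtain ⟨Y₁', hY₁sub, hY₁eq⟩ := hY1
  obtain ⟨Y₂', hY₂sub, hY₂eq⟩ := hY2
  have hmem₁ : ∀ u : s₁ → ℕ, expSum s₁ u ∈ N₁ := fun u => by
    rw [← hs₁]; exact expSum_mem_closure s₁ u
  have hmem₂ : ∀ v : s₂ → ℕ, expSum s₂ v ∈ N₂ := fun v => by
    rw [← hs₂]; exact expSum_mem_closure s₂ v
  -- for each pair (y, z) of generators, Dickson's lemma gives a finite dominating
  -- set of solutions of `expSum s₁ u +ᵥ y = expSum s₂ v +ᵥ z`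
  have key : ∀ y z : X, ∃ F : Finset ((s₁ → ℕ) × (s₂ → ℕ)),
      (∀ p ∈ F, expSum s₁ p.1 +ᵥ y = expSum s₂ p.2 +ᵥ z) ∧
      ∀ p : (s₁ → ℕ) × (s₂ → ℕ), expSum s₁ p.1 +ᵥ y = expSum s₂ p.2 +ᵥ z →
        ∃ q ∈ F, q ≤ p := by
    intro y z
    obtain ⟨F, hFfin, hFsub, hFdom⟩ :=
      dickson_dominating {p : (s₁ → ℕ) × (s₂ → ℕ) | expSum s₁ p.1 +ᵥ y = expSum s₂ p.2 +ᵥ z}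
    refine ⟨hFfin.toFinset, fun p hp => hFsub (hFfin.mem_toFinset.mp hp), fun p hp => ?_⟩
    obtain ⟨q, hq, hqle⟩ := hFdom p hp
    exact ⟨q, hFfin.mem_toFinset.mpr hq, hqle⟩
  choose F hF1 hF2 using key
  refine ⟨(Y₁' ×ˢ Y₂').biUnion (fun q => (F q.1 q.2).image (fun p => expSum s₁ p.1 +ᵥ q.1)),
    ?_, ?_⟩
  · -- the generators lie in Y₁ ∩ Y₂
    intro x hx
    simp only [Finset.coe_biUnion, Set.mem_iUnion, Finset.mem_coe, Finset.mem_image,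
      Finset.mem_product] at hx
    obtain ⟨q, hq, p, hp, rfl⟩ := hx
    constructor
    · rw [hY₁eq]; exact ⟨expSum s₁ p.1, hmem₁ _, q.1, hq.1, rfl⟩
    · rw [hY₂eq]; exact ⟨expSum s₂ p.2, hmem₂ _, q.2, hq.2, (hF1 q.1 q.2 p hp).symm⟩
  · ext x
    simp only [Set.mem_setOf_eq, Set.mem_inter_iff]
    constructor
    · rintro ⟨hx1, hx2⟩
      rw [hY₁eq] at hx1
      rw [hY₂eq] at hx2
      obtain ⟨a, haN, y, hy, rfl⟩ := hx1
      obtain ⟨b, hbN, z, hz, hbz⟩ := hx2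
      rw [← hs₁] at haN
      rw [← hs₂] at hbN
      obtain ⟨u, hu⟩ := exists_expSum_of_mem_closure haN
      obtain ⟨v, hv⟩ := exists_expSum_of_mem_closure hbN
      have hpE : expSum s₁ u +ᵥ y = expSum s₂ v +ᵥ z := by rw [hu, hv, hbz]
      obtain ⟨q₀, hq₀F, hq₀le⟩ := hF2 y z (u, v) hpE
      have hbase : expSum s₁ q₀.1 +ᵥ y = expSum s₂ q₀.2 +ᵥ z := hF1 y z q₀ hq₀F
      set u' : s₁ → ℕ := u - q₀.1 with hu'def
      set v' : s₂ → ℕ := v - q₀.2 with hv'def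
      have hu' : u = q₀.1 + u' := funext fun i => by
        have h : q₀.1 i ≤ u i := hq₀le.1 i
        simp only [hu'def, Pi.add_apply, Pi.sub_apply]; omega
      have hv' : v = q₀.2 + v' := funext fun j => by
        have h : q₀.2 j ≤ v j := hq₀le.2 j
        simp only [hv'def, Pi.add_apply, Pi.sub_apply]; omega
      have hkey : expSum s₁ u' = expSum s₂ v' := by
        refine vadd_cancel_of_free hX (x := expSum s₂ q₀.2 +ᵥ z) ?_
        calc expSum s₁ u' +ᵥ (expSum s₂ q₀.2 +ᵥ z)
            = expSum s₁ u' +ᵥ (expSum s₁ q₀.1 +ᵥ y) := by rw [hbase]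
          _ = (expSum s₁ q₀.1 + expSum s₁ u') +ᵥ y := by rw [← add_vadd, add_comm]
          _ = expSum s₁ u +ᵥ y := by rw [← expSum_add, ← hu']
          _ = expSum s₂ v +ᵥ z := hpE
          _ = (expSum s₂ q₀.2 + expSum s₂ v') +ᵥ z := by rw [← expSum_add, ← hv']
          _ = expSum s₂ v' +ᵥ (expSum s₂ q₀.2 +ᵥ z) := by rw [add_comm, add_vadd]
      refine ⟨expSum s₁ u', ?_, expSum s₁ q₀.1 +ᵥ y, ?_, ?_⟩
      · exact AddSubmonoid.mem_inf.mpr ⟨hmem₁ _, hkey ▸ hmem₂ v'⟩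
      · exact Finset.mem_biUnion.mpr ⟨(y, z), Finset.mem_product.mpr ⟨hy, hz⟩,
          Finset.mem_image.mpr ⟨q₀, hq₀F, rfl⟩⟩
      · rw [← add_vadd, add_comm, ← expSum_add, ← hu', hu]
    · rintro ⟨n, hn, g, hg, rfl⟩
      rw [AddSubmonoid.mem_inf] at hn
      simp only [Finset.mem_biUnion, Finset.mem_image, Finset.mem_product] at hg
      obtain ⟨q, hq, p, hp, rfl⟩ := hg
      constructor
      · rw [hY₁eq]
        exact ⟨n + expSum s₁ p.1, add_mem hn.1 (hmem₁ _), q.1, hq.1, by rw [add_vadd]⟩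
      · rw [hY₂eq]
        exact ⟨n + expSum s₂ p.2, add_mem hn.2 (hmem₂ _), q.2, hq.2,
          by rw [add_vadd, ← hF1 q.1 q.2 p hp]⟩
end
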